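/- Let Φ be an N×m real matrix of ROM basis vectors, e ∈ ℝ^N, and suppose (i) the momentum-conservation constraint eᵀ Ω Φ Φᵀ = eᵀ holds, and (ii) the full-order right-hand side F : ℝ^N → ℝ^N globally conserves momentum, i.e. eᵀ F(W) = 0 for all W ∈ ℝ^N. If a : ℝ → ℝ^m is differentiable and satisfies the ROM evolution equation a'(t) = Φᵀ F(Φ a(t)) for all t, then the ROM global momentum P_r(t) := eᵀ Ω Φ a(t) is constant in time: d/dt P_r(t) = 0 for all t, and hence P_r(t) = P_r(0) for all t. -/

import Mathlib

open Matrix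

theorem HasDerivAt.const_dotProduct {𝕜 ι : Type*} [NontriviallyNormedField 𝕜] [Fintype ι]
    {a : 𝕜 → ι → 𝕜} {a' : ι → 𝕜} {t : 𝕜} (w : ι → 𝕜) (ha : HasDerivAt a a' t) :
    HasDerivAt (fun s => w ⬝ᵥ a s) (w ⬝ᵥ a') t := by
  simp only [dotProduct]
  exact HasDerivAt.fun_sum fun i _ => (hasDerivAt_pi.mp ha i).const_mul (w i)

theorem Matrix.vecMul_dotProduct_transpose_mulVec {R l n : Type*} [CommSemiring R]
    [Fintype l] [Fintype n] {e : l → R} {A B : Matrix l n R} (h : e ᵥ* (A * Bᵀ) = e)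
    (f : l → R) : (e ᵥ* A) ⬝ᵥ (Bᵀ *ᵥ f) = e ⬝ᵥ f := by
  rw [dotProduct_mulVec, vecMul_vecMul, h]

theorem rom_global_momentum_conserved_general
    (N m : ℕ)
    (Ω : Matrix (Fin N) (Fin N) ℝ)
    (Φ : Matrix (Fin N) (Fin m) ℝ) (e : Fin N → ℝ)
    (hproj : e ᵥ* (Ω * Φ * Φᵀ) = e)
    (F : (Fin N → ℝ) → (Fin N → ℝ)) (hF : ∀ W : Fin N → ℝ, e ⬝ᵥ F W = 0)
    (a : ℝ → Fin m → ℝ)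
    (ha : ∀ t, HasDerivAt a (Φᵀ *ᵥ F (Φ *ᵥ a t)) t) :
    (∀ t, HasDerivAt (fun s => e ⬝ᵥ (Ω *ᵥ (Φ *ᵥ a s))) 0 t) ∧
    (∀ t, e ⬝ᵥ (Ω *ᵥ (Φ *ᵥ a t)) = e ⬝ᵥ (Ω *ᵥ (Φ *ᵥ a 0))) := by
  have hP : (fun s => e ⬝ᵥ (Ω *ᵥ (Φ *ᵥ a s))) = fun s => (e ᵥ* (Ω * Φ)) ⬝ᵥ a s := by
    funext s
    rw [dotProduct_mulVec, dotProduct_mulVec, vecMul_vecMul]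
  have hderiv : ∀ t, HasDerivAt (fun s => e ⬝ᵥ (Ω *ᵥ (Φ *ᵥ a s))) 0 t := fun t => by
    rw [hP, ← hF (Φ *ᵥ a t), ← vecMul_dotProduct_transpose_mulVec hproj]
    exact (ha t).const_dotProduct _
  exact ⟨hderiv, fun t =>
    is_const_of_deriv_eq_zero (fun s => (hderiv s).differentiableAt) (fun s => (hderiv s).deriv) t 0⟩

/-- Global momentum conservation of the ROM: if the exact-projection constraint
`eᵀ Ω Φ Φᵀ = eᵀ` holds and the FOM right-hand side conserves momentum
(`eᵀ F(W) = 0`), then the ROM momentum `P_r(t) = eᵀ Ω Φ a(t)` is constant. -/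
theorem rom_global_momentum_conserved
    (N m : ℕ)
    (Ω : Matrix (Fin N) (Fin N) ℝ) (hΩdiag : Ω.IsDiag) (hΩpos : ∀ i, 0 < Ω i i)
    (Φ : Matrix (Fin N) (Fin m) ℝ) (e : Fin N → ℝ)
    (hproj : e ᵥ* (Ω * Φ * Φᵀ) = e)
    (F : (Fin N → ℝ) → (Fin N → ℝ)) (hF : ∀ W : Fin N → ℝ, e ⬝ᵥ F W = 0)
    (a : ℝ → Fin m → ℝ)
    (ha : ∀ t, HasDerivAt a (Φᵀ *ᵥ F (Φ *ᵥ a t)) t) :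
    (∀ t, HasDerivAt (fun s => e ⬝ᵥ (Ω *ᵥ (Φ *ᵥ a s))) 0 t) ∧
    (∀ t, e ⬝ᵥ (Ω *ᵥ (Φ *ᵥ a t)) = e ⬝ᵥ (Ω *ᵥ (Φ *ᵥ a 0))) :=
  rom_global_momentum_conserved_general N m Ω Φ e hproj F hF a ha
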